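/- Let a_ij ∈ {0,1} for i,j ∈ {1,…,N} with a_ij = a_ji and a_ii = 0, and set b_ij = −2a_ij and b_l = Σ_{j=1}^{N} a_lj. Let real numbers c_l satisfy c_l ≥ b_l and c_l − b_l < 1/N for all l. Then every maximizer over y ∈ {0,1}^N of the perturbed objective Σ_{i<j} b_ij y_i y_j + Σ_l c_l y_l is also a maximizer of the original zero-one UQP objective Σ_{i<j} b_ij y_i y_j + Σ_l b_l y_l (and hence its indicator set {i : y_i = 1} realizes a maximum cut of the graph with adjacency entries a_ij). -/

import Mathlib

/-- `y` is a binary vector, i.e. `y ∈ {0,1}^N` viewed inside `ℝ^N`. -/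
def IsBin {N : ℕ} (y : Fin N → ℝ) : Prop := ∀ i, y i = 0 ∨ y i = 1

/-!
All coefficients `-2 a_ij` and `b_l` are integers, so the UQP objective `f` takes integer values
on `{0,1}^N`.
Raising the linear coefficients from `b` to `c ≥ b` can only increase the objective at a binary
point, and increases it by less than `N · (1/N) = 1`. Hence for a maximizer `y` of the perturbed
objective `g` and any binary `z` we get `f z ≤ g z ≤ g y < f y + 1`,
and integrality gives `f z ≤ f y`.
-/

open Finset

namespace IsBin

variable {N : ℕ} {y : Fin N → ℝ}

lemma nonneg (hy : IsBin y) (i : Fin N) : 0 ≤ y i := by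
  rcases hy i with h | h <;> simp [h]

lemma le_one (hy : IsBin y) (i : Fin N) : y i ≤ 1 := by
  rcases hy i with h | h <;> simp [h]

lemma mem_subring (hy : IsBin y) (S : Subring ℝ) (i : Fin N) : y i ∈ S := by
  rcases hy i with h | h <;> simp [h, S.zero_mem, S.one_mem]

end IsBin

def uqpObjective {N : ℕ} (B : Fin N → Fin N → ℝ) (b y : Fin N → ℝ) : ℝ :=
  (∑ i, ∑ j ∈ Ioi i, B i j * (y i * y j)) + ∑ l, b l * y l

section uqpObjective

variable {N : ℕ} (B : Fin N → Fin N → ℝ)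

lemma uqpObjective_mem_subring (S : Subring ℝ) {b y : Fin N → ℝ} (hB : ∀ i j, B i j ∈ S)
    (hb : ∀ l, b l ∈ S) (hy : ∀ i, y i ∈ S) : uqpObjective B b y ∈ S :=
  S.add_mem
    (S.sum_mem fun i _ => S.sum_mem fun j _ => S.mul_mem (hB i j) (S.mul_mem (hy i) (hy j)))
    (S.sum_mem fun l _ => S.mul_mem (hb l) (hy l))

lemma uqpObjective_le_of_le {b c y : Fin N → ℝ} (hbc : ∀ l, b l ≤ c l) (hy : IsBin y) :
    uqpObjective B b y ≤ uqpObjective B c y := by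
  unfold uqpObjective
  gcongr with l
  · exact hy.nonneg l
  · exact hbc l

lemma uqpObjective_lt_add_one {b c y : Fin N → ℝ} (hbc : ∀ l, b l ≤ c l)
    (hcb : ∀ l, c l - b l < 1 / (N : ℝ)) (hy : IsBin y) :
    uqpObjective B c y < uqpObjective B b y + 1 := by
  have hdiff : uqpObjective B c y - uqpObjective B b y = ∑ l, (c l - b l) * y l := by
    simp only [uqpObjective, sub_mul, sum_sub_distrib]
    ring
  have hsum : ∑ l, (c l - b l) * y l < 1 := by
    rcases isEmpty_or_nonempty (Fin N) with _ | ⟨⟨l₀⟩⟩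
    · simp
    calc ∑ l, (c l - b l) * y l
        < ∑ _l : Fin N, 1 / (N : ℝ) := by
          refine sum_lt_sum_of_nonempty ⟨l₀, mem_univ _⟩ fun l _ => ?_
          calc (c l - b l) * y l ≤ c l - b l :=
                mul_le_of_le_one_right (sub_nonneg.mpr (hbc l)) (hy.le_one l)
            _ < 1 / N := hcb l
      _ = 1 := by
          have hN : (N : ℝ) ≠ 0 := Nat.cast_ne_zero.mpr l₀.pos.ne'
          simp [hN]
  linarith

end uqpObjective

lemma le_of_lt_add_one_of_mem_intCast_range {x y : ℝ} (hx : x ∈ (Int.castRingHom ℝ).range)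
    (hy : y ∈ (Int.castRingHom ℝ).range) (h : x < y + 1) : x ≤ y := by
  obtain ⟨m, rfl⟩ := hx
  obtain ⟨n, rfl⟩ := hy
  simp only [eq_intCast] at h ⊢
  have : m < n + 1 := by exact_mod_cast h
  exact_mod_cast Int.lt_add_one_iff.mp this

theorem statement8_general (N : ℕ) (a : Fin N → Fin N → ℝ)
    (hbin : ∀ i j, a i j = 0 ∨ a i j = 1)
    (c : Fin N → ℝ)
    (hc : ∀ l, (∑ j : Fin N, a l j) ≤ c l ∧ c l - (∑ j : Fin N, a l j) < 1 / (N : ℝ))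
    (y : Fin N → ℝ) (hy : IsBin y)
    (hmax : ∀ z, IsBin z →
      (∑ i : Fin N, ∑ j ∈ Finset.Ioi i, (-2 * a i j) * (z i * z j)) + ∑ l, c l * z l
        ≤ (∑ i : Fin N, ∑ j ∈ Finset.Ioi i, (-2 * a i j) * (y i * y j)) + ∑ l, c l * y l) :
    ∀ z, IsBin z →
      (∑ i : Fin N, ∑ j ∈ Finset.Ioi i, (-2 * a i j) * (z i * z j))
          + ∑ l, (∑ j : Fin N, a l j) * z l
        ≤ (∑ i : Fin N, ∑ j ∈ Finset.Ioi i, (-2 * a i j) * (y i * y j))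
          + ∑ l, (∑ j : Fin N, a l j) * y l := by
  intro z hz
  let B : Fin N → Fin N → ℝ := fun i j => -2 * a i j
  let deg : Fin N → ℝ := fun l => ∑ j, a l j
  let S := (Int.castRingHom ℝ).range
  have ha : ∀ i j, a i j ∈ S := fun i j => (hbin i j).elim
    (fun h => h ▸ S.zero_mem) (fun h => h ▸ S.one_mem)
  have hB : ∀ i j, B i j ∈ S := fun i j => S.mul_mem (S.neg_mem ⟨2, by norm_num⟩) (ha i j)
  have hdeg : ∀ l, deg l ∈ S := fun l => S.sum_mem fun j _ => ha l j
  have hint : ∀ x, IsBin x → uqpObjective B deg x ∈ S := fun x hx =>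
    uqpObjective_mem_subring B S hB hdeg (hx.mem_subring S)
  refine le_of_lt_add_one_of_mem_intCast_range (hint z hz) (hint y hy) ?_
  calc uqpObjective B deg z ≤ uqpObjective B c z :=
        uqpObjective_le_of_le B (fun l => (hc l).1) hz
    _ ≤ uqpObjective B c y := hmax z hz
    _ < uqpObjective B deg y + 1 :=
        uqpObjective_lt_add_one B (fun l => (hc l).1) (fun l => (hc l).2) hy

/-- Let `a i j ∈ {0,1}` be symmetric with zero diagonal, `b_ij = −2 a_ij`,
`b_l = Σ_j a_lj` (the degree of `l`), and let the reals `c_l` satisfy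
`c_l ≥ b_l` and `c_l − b_l < 1/N` for all `l`. Then every maximizer over
`y ∈ {0,1}^N` of the perturbed objective `Σ_{i<j} b_ij y_i y_j + Σ_l c_l y_l`
is also a maximizer of the original zero-one UQP objective
`Σ_{i<j} b_ij y_i y_j + Σ_l b_l y_l`. -/
theorem statement8 (N : ℕ) (a : Fin N → Fin N → ℝ)
    (hbin : ∀ i j, a i j = 0 ∨ a i j = 1) (hsymm : ∀ i j, a i j = a j i)
    (hdiag : ∀ i, a i i = 0)
    (c : Fin N → ℝ)
    (hc : ∀ l, (∑ j : Fin N, a l j) ≤ c l ∧ c l - (∑ j : Fin N, a l j) < 1 / (N : ℝ))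
    (y : Fin N → ℝ) (hy : IsBin y)
    (hmax : ∀ z, IsBin z →
      (∑ i : Fin N, ∑ j ∈ Finset.Ioi i, (-2 * a i j) * (z i * z j)) + ∑ l, c l * z l
        ≤ (∑ i : Fin N, ∑ j ∈ Finset.Ioi i, (-2 * a i j) * (y i * y j)) + ∑ l, c l * y l) :
    ∀ z, IsBin z →
      (∑ i : Fin N, ∑ j ∈ Finset.Ioi i, (-2 * a i j) * (z i * z j))
          + ∑ l, (∑ j : Fin N, a l j) * z l
        ≤ (∑ i : Fin N, ∑ j ∈ Finset.Ioi i, (-2 * a i j) * (y i * y j))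
          + ∑ l, (∑ j : Fin N, a l j) * y l :=
  statement8_general N a hbin c hc y hy hmax
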